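/- Let L ≥ 1, let A_l ≥ 2 for all 1 ≤ l ≤ L, and let (K,S) ∈ 𝕄. Then ((1 + ln(2π))/2)·D_{(K,S)} ≤ C_{(K,S)} ≤ (2 + ln(2π) + (ln 2)/2)·D_{(K,S)}. -/

import Mathlib

open Real BigOperators

noncomputable section

/-- The collection 𝕄 of model indices `(K, S)`. -/
def Mset (L : ℕ) : Set (ℕ × Finset (Fin L)) :=
  {p | (p.1 = 1 ∧ p.2 = ∅) ∨ (2 ≤ p.1 ∧ p.2.Nonempty)}

/-- Dimension `D_{(K,S)}` of the model `M_{(K,S)}`. -/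
def Dks {L : ℕ} (A : Fin L → ℕ) (K : ℕ) (S : Finset (Fin L)) : ℕ :=
  (K - 1) + K * ∑ l ∈ S, (A l - 1) + ∑ l ∈ Sᶜ, (A l - 1)

/-- The complexity constant `C_{(K,S)}`. -/
def Cks {L : ℕ} (A : Fin L → ℕ) (K : ℕ) (S : Finset (Fin L)) : ℝ :=
  (Real.log (2 * Real.pi * Real.exp 1) * (Dks A K S : ℝ)
    + Real.log (4 * Real.pi * Real.exp 1)
        * ((if 2 ≤ K then (1 : ℝ) else 0) + (L : ℝ) + ((K : ℝ) - 1) * (S.card : ℝ))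
    + (if 2 ≤ K then Real.log ((K : ℝ) + 1) else 0)
    + ∑ l, Real.log ((A l : ℝ) + 1)
    + ((K : ℝ) - 1) * ∑ l ∈ S, Real.log ((A l : ℝ) + 1)) / 2

/-!
Both `D` and `2 C` are sums of the same shape over the dimensions `d ≥ 1` of the probability
simplices making up the model: the mixture weights (dimension `K - 1`, present only when `K ≥ 2`),
and `A_l - 1` once for every `l` plus `K - 1` more times for `l ∈ S`. The summand is `d` for `D`
and `c(d) = ln(2πe) d + ln(4πe) + ln(d + 2)` for `2 C`, so the bounds reduce to
`(1 + ln 2π) d ≤ c(d) ≤ (4 + 2 ln 2π + ln 2) d` for `d ≥ 1`, where the upper bound uses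
`ln(d + 2) ≤ d + 1 ≤ 2 d`.
-/

open Finset

def simplexSum {L : ℕ} (A : Fin L → ℕ) (K : ℕ) (S : Finset (Fin L)) (f : ℝ → ℝ) : ℝ :=
  (if 2 ≤ K then f ((K : ℝ) - 1) else 0) + ∑ l, f ((A l : ℝ) - 1)
    + ((K : ℝ) - 1) * ∑ l ∈ S, f ((A l : ℝ) - 1)

def simplexCost (d : ℝ) : ℝ :=
  log (2 * π * exp 1) * d + log (4 * π * exp 1) + log (d + 2)

section simplexSum

variable {L : ℕ} (A : Fin L → ℕ) (K : ℕ) (S : Finset (Fin L))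

lemma simplexSum_const_mul (c : ℝ) (f : ℝ → ℝ) :
    simplexSum A K S (fun d => c * f d) = c * simplexSum A K S f := by
  simp only [simplexSum, ← mul_sum]
  split_ifs <;> ring

variable {A K S} in
lemma simplexSum_mono (hK : 1 ≤ K) (hA : ∀ l, 2 ≤ A l) {f g : ℝ → ℝ}
    (hfg : ∀ d, 1 ≤ d → f d ≤ g d) : simplexSum A K S f ≤ simplexSum A K S g := by
  have hA' (l : Fin L) : (1 : ℝ) ≤ (A l : ℝ) - 1 := by
    have : (2 : ℝ) ≤ A l := by exact_mod_cast hA l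
    linarith
  have hK' : (0 : ℝ) ≤ (K : ℝ) - 1 := by
    have : (1 : ℝ) ≤ K := by exact_mod_cast hK
    linarith
  unfold simplexSum
  gcongr ?_ + ?_ + ?_
  · split_ifs with h
    · have : (2 : ℝ) ≤ K := by exact_mod_cast h
      exact hfg _ (by linarith)
    · rfl
  · exact sum_le_sum fun l _ => hfg _ (hA' l)
  · exact mul_le_mul_of_nonneg_left (sum_le_sum fun l _ => hfg _ (hA' l)) hK'

lemma Dks_eq_simplexSum (hK : 1 ≤ K) (hA : ∀ l, 1 ≤ A l) :
    (Dks A K S : ℝ) = simplexSum A K S id := by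
  have hcast (T : Finset (Fin L)) :
      ((∑ l ∈ T, (A l - 1) : ℕ) : ℝ) = ∑ l ∈ T, ((A l : ℝ) - 1) := by
    push_cast [Nat.cast_sub (hA _)]
    rfl
  have hsplit := sum_add_sum_compl S fun l => (A l : ℝ) - 1
  simp only [Dks, simplexSum, id, Nat.cast_add, Nat.cast_mul, hcast, Nat.cast_sub hK, Nat.cast_one]
  split_ifs with h
  · linear_combination hsplit
  · obtain rfl : K = 1 := by omega
    linear_combination hsplit

lemma two_mul_Cks_eq_simplexSum (hK : 1 ≤ K) (hA : ∀ l, 1 ≤ A l) :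
    2 * Cks A K S = simplexSum A K S simplexCost := by
  have hshift (x : ℝ) : x - 1 + 2 = x + 1 := by ring
  rw [Cks, Dks_eq_simplexSum A K S hK hA]
  simp only [simplexSum, simplexCost, id, hshift, sum_add_distrib, ← mul_sum,
    sum_const, card_univ, Fintype.card_fin, nsmul_eq_mul]
  split_ifs <;> ring

end simplexSum

lemma Real.log_two_mul_pi_mul_exp_one : log (2 * π * exp 1) = 1 + log (2 * π) := by
  rw [log_mul (by positivity) (exp_ne_zero 1), log_exp, add_comm]

lemma Real.log_four_mul_pi_mul_exp_one :
    log (4 * π * exp 1) = 1 + log 2 + log (2 * π) := by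
  rw [show (4 : ℝ) * π * exp 1 = 2 * (2 * π * exp 1) by ring,
    log_mul two_ne_zero (by positivity), log_two_mul_pi_mul_exp_one]
  ring

lemma Real.log_four_mul_pi_mul_exp_one_nonneg : 0 ≤ log (4 * π * exp 1) :=
  log_nonneg (by nlinarith [pi_gt_three, add_one_le_exp (1 : ℝ)])

lemma mul_le_simplexCost {d : ℝ} (hd : 0 ≤ d) : (1 + log (2 * π)) * d ≤ simplexCost d := by
  have h4 := log_four_mul_pi_mul_exp_one_nonneg
  have hd2 : 0 ≤ log (d + 2) := log_nonneg (by linarith)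
  rw [simplexCost, log_two_mul_pi_mul_exp_one]
  linarith

lemma simplexCost_le_mul {d : ℝ} (hd : 1 ≤ d) :
    simplexCost d ≤ (4 + 2 * log (2 * π) + log 2) * d := by
  have hconst : log (4 * π * exp 1) ≤ log (4 * π * exp 1) * d :=
    le_mul_of_one_le_right log_four_mul_pi_mul_exp_one_nonneg hd
  have hd2 : log (d + 2) ≤ d + 1 := by linarith [log_le_sub_one_of_pos (by linarith : 0 < d + 2)]
  rw [simplexCost, log_two_mul_pi_mul_exp_one]
  rw [log_four_mul_pi_mul_exp_one] at hconst ⊢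
  linarith

theorem Cks_bounds_general (L : ℕ) (A : Fin L → ℕ) (hA : ∀ l, 2 ≤ A l)
    (K : ℕ) (S : Finset (Fin L)) (hm : (K, S) ∈ Mset L) :
    ((1 + Real.log (2 * Real.pi)) / 2) * (Dks A K S : ℝ) ≤ Cks A K S ∧
    Cks A K S ≤ (2 + Real.log (2 * Real.pi) + Real.log 2 / 2) * (Dks A K S : ℝ) := by
  have hK : 1 ≤ K := by rcases hm with ⟨rfl, -⟩ | ⟨h, -⟩ <;> omega
  have hA1 (l : Fin L) : 1 ≤ A l := one_le_two.trans (hA l)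
  have hC : Cks A K S = simplexSum A K S simplexCost / 2 := by
    rw [← two_mul_Cks_eq_simplexSum A K S hK hA1]
    ring
  rw [hC, Dks_eq_simplexSum A K S hK hA1]
  constructor
  · calc (1 + log (2 * π)) / 2 * simplexSum A K S id
        = simplexSum A K S (fun d => (1 + log (2 * π)) * id d) / 2 := by
          rw [simplexSum_const_mul]
          ring
      _ ≤ simplexSum A K S simplexCost / 2 := by
          gcongr
          exact simplexSum_mono hK hA fun d hd => mul_le_simplexCost (zero_le_one.trans hd)
  · calc simplexSum A K S simplexCost / 2
        ≤ simplexSum A K S (fun d => (4 + 2 * log (2 * π) + log 2) * id d) / 2 := by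
          gcongr
          exact simplexSum_mono hK hA fun d hd => simplexCost_le_mul hd
      _ = (2 + log (2 * π) + log 2 / 2) * simplexSum A K S id := by
          rw [simplexSum_const_mul]
          ring

/-- **Bounds relating `C_{(K,S)}` and `D_{(K,S)}`.** -/
theorem Cks_bounds (L : ℕ) (hL : 1 ≤ L) (A : Fin L → ℕ) (hA : ∀ l, 2 ≤ A l)
    (K : ℕ) (S : Finset (Fin L)) (hm : (K, S) ∈ Mset L) :
    ((1 + Real.log (2 * Real.pi)) / 2) * (Dks A K S : ℝ) ≤ Cks A K S ∧
    Cks A K S ≤ (2 + Real.log (2 * Real.pi) + Real.log 2 / 2) * (Dks A K S : ℝ) :=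
  Cks_bounds_general L A hA K S hm

end
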